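/- For a ∈ (0,1) let e(a) = √(1 − a²) and let σ(a) = √( e(a) / ( e(a) + a·artanh(e(a)) ) ), where artanh denotes the inverse hyperbolic tangent. Then σ is strictly decreasing on the open interval (0,1): for all 0 < a < a' < 1 one has σ(a') < σ(a). -/

import Mathlib

/-- The inverse hyperbolic tangent. -/
noncomputable def artanh (x : ℝ) : ℝ := (1 / 2) * Real.log ((1 + x) / (1 - x))

/-- `e a = √(1 - a²)`, the eccentricity of the oblate spheroid with semi-axes `(a,1,1)`. -/
noncomputable def ecc (a : ℝ) : ℝ := Real.sqrt (1 - a ^ 2)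

/-- The softness `σ(a) = √( e/(e + a·artanh e) )` of the oblate spheroid with
semi-axes `(a,1,1)`, where `e = √(1 - a²)`. -/
noncomputable def softness (a : ℝ) : ℝ :=
  Real.sqrt (ecc a / (ecc a + a * artanh (ecc a)))

/-!
Substitute `t = artanh e`, so that `a = 1 / cosh t` and `e = tanh t`. Then
`σ(a)² = sinh t / (sinh t + t)`, which increases with `sinh t / t`, the slope of the chord of the
convex function `sinh` from the origin. Since `t` decreases as `a` increases, `σ` decreases.
-/

open Set
open Real hiding artanh

lemma artanh_eq_real_artanh {x : ℝ} (hx : x ∈ Icc (-1) 1) : artanh x = Real.artanh x :=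
  (Real.artanh_eq_half_log hx).symm

lemma strictConvexOn_sinh : StrictConvexOn ℝ (Ici 0) sinh := by
  refine strictConvexOn_of_deriv2_pos (convex_Ici 0) continuous_sinh.continuousOn fun x hx => ?_
  rw [interior_Ici] at hx
  simpa [Real.deriv_sinh, Real.deriv_cosh] using hx

lemma strictMonoOn_sinh_div_self : StrictMonoOn (fun t => sinh t / t) (Ioi 0) := by
  intro s (hs : 0 < s) t (ht : 0 < t) hst
  simpa using strictConvexOn_sinh.secant_strict_mono self_mem_Ici hs.le ht.le hs.ne' ht.ne' hst

lemma strictMonoOn_sinh_div_sinh_add_self :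
    StrictMonoOn (fun t => sinh t / (sinh t + t)) (Ioi 0) := by
  intro s (hs : 0 < s) t (ht : 0 < t) hst
  have hslope : sinh s / s < sinh t / t := strictMonoOn_sinh_div_self hs ht hst
  rw [div_lt_div_iff₀ hs ht] at hslope
  rw [div_lt_div_iff₀ (by positivity) (by positivity)]
  linarith

lemma ecc_strictAntiOn : StrictAntiOn ecc (Icc 0 1) := by
  intro a ⟨ha₀, _⟩ b ⟨_, hb₁⟩ hab
  exact sqrt_lt_sqrt (by nlinarith) (by nlinarith)

lemma one_sub_ecc_sq {a : ℝ} (ha : a ∈ Icc 0 1) : 1 - ecc a ^ 2 = a ^ 2 := by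
  rw [ecc, sq_sqrt (by nlinarith [ha.1, ha.2])]
  ring

lemma ecc_mem_Ioo {a : ℝ} (ha : a ∈ Ioo 0 1) : ecc a ∈ Ioo 0 1 := by
  have h := one_sub_ecc_sq (Ioo_subset_Icc_self ha)
  have hnonneg : 0 ≤ ecc a := sqrt_nonneg _
  constructor <;> nlinarith [ha.1, ha.2]

lemma sinh_artanh_ecc {a : ℝ} (ha : a ∈ Ioo 0 1) : sinh (Real.artanh (ecc a)) = ecc a / a := by
  have he := ecc_mem_Ioo ha
  rw [sinh_artanh ⟨by linarith [he.1], he.2⟩, one_sub_ecc_sq (Ioo_subset_Icc_self ha),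
    sqrt_sq ha.1.le]

lemma softness_eq {a : ℝ} (ha : a ∈ Ioo 0 1) :
    softness a = √(sinh (Real.artanh (ecc a)) /
      (sinh (Real.artanh (ecc a)) + Real.artanh (ecc a))) := by
  have he := ecc_mem_Ioo ha
  rw [softness, artanh_eq_real_artanh ⟨by linarith [he.1], he.2.le⟩, sinh_artanh_ecc ha]
  field_simp [ha.1.ne']

/-- the softness σ is strictly decreasing on (0,1):
for all 0 < a < a' < 1 one has σ(a') < σ(a). -/
theorem softness_strictAntiOn : StrictAntiOn softness (Set.Ioo (0 : ℝ) 1) := by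
  intro a ha b hb hab
  have hea := ecc_mem_Ioo ha
  have heb := ecc_mem_Ioo hb
  have hecc : ecc b < ecc a :=
    ecc_strictAntiOn (Ioo_subset_Icc_self ha) (Ioo_subset_Icc_self hb) hab
  have ht : Real.artanh (ecc b) < Real.artanh (ecc a) :=
    Real.artanh_lt_artanh (by linarith [heb.1]) hea.2 hecc
  have ht₀ : 0 < Real.artanh (ecc b) := artanh_pos heb
  rw [softness_eq ha, softness_eq hb]
  refine sqrt_lt_sqrt ?_ (strictMonoOn_sinh_div_sinh_add_self ht₀ (ht₀.trans ht) ht)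
  positivity
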